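/- arXiv:0905.4757 — 2 statements merged into one kernel-verified Lean document; each statement's English description precedes it below -/
import Mathlib

section
/- If Y evolves by Y(t+1) = max(Y(t) − α(t), 0) with α : ℕ → ℝ (possibly negative), then for any t and T ≥ 1, (1/2)Y(t+T)² ≤ (1/2)Y(t)² − Y(t)·Σ_{τ=0}^{T−1} α(t+τ) + (1/2)(Σ_{τ=0}^{T−1}|α(t+τ)|)². -/
/-!
Since `x ↦ max x 0` is 1-Lipschitz, fixes `Y t ≥ 0` and does not increase `x ^ 2`, each step gives
`|Y (s+1) - Y s| ≤ |α s|` and `Y (s+1)² ≤ (Y s - α s)²`. Expanding the square, the cross term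
`Y (t+n) · α (t+n)` differs from `Y t · α (t+n)` by at most `(∑_{τ<n} |α (t+τ)|) · |α (t+n)|`,
which is exactly what completes `(∑_{τ<n} |α (t+τ)|)²` to the next square in an induction on `T`.
-/

open Finset

lemma sq_max_zero_le (x : ℝ) : max x 0 ^ 2 ≤ x ^ 2 :=
  sq_le_sq.2 (by simpa using abs_max_sub_max_le_abs x 0 0)

lemma abs_max_sub_zero_sub_le {y : ℝ} (hy : 0 ≤ y) (a : ℝ) : |max (y - a) 0 - y| ≤ |a| := by
  calc |max (y - a) 0 - y| = |max (y - a) 0 - max y 0| := by rw [max_eq_left hy]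
    _ ≤ |y - a - y| := abs_max_sub_max_le_abs _ _ _
    _ = |a| := by rw [sub_sub_cancel_left, abs_neg]

section StepBounds

variable {Y α : ℕ → ℝ}

lemma abs_sub_le_sum_abs_of_abs_succ_sub_le (hstep : ∀ s, |Y (s + 1) - Y s| ≤ |α s|) (t T : ℕ) :
    |Y (t + T) - Y t| ≤ ∑ τ ∈ range T, |α (t + τ)| := by
  rw [abs_sub_comm, ← Real.dist_eq]
  exact dist_le_range_sum_of_dist_le (f := fun k ↦ Y (t + k)) T fun {k} _ ↦ by
    simpa [Real.dist_eq, abs_sub_comm, ← add_assoc] using hstep (t + k)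

lemma sq_le_of_step_bounds (hstep : ∀ s, |Y (s + 1) - Y s| ≤ |α s|)
    (hsq : ∀ s, Y (s + 1) ^ 2 ≤ (Y s - α s) ^ 2) (t T : ℕ) :
    Y (t + T) ^ 2 ≤ Y t ^ 2 - 2 * Y t * ∑ τ ∈ range T, α (t + τ)
      + (∑ τ ∈ range T, |α (t + τ)|) ^ 2 := by
  induction T with
  | zero => simp
  | succ n ih =>
    set S := ∑ τ ∈ range n, |α (t + τ)|
    have hS : 0 ≤ S := sum_nonneg fun _ _ ↦ abs_nonneg _
    have hcross : Y t * α (t + n) - S * |α (t + n)| ≤ Y (t + n) * α (t + n) := by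
      have hdrift : |Y (t + n) - Y t| * |α (t + n)| ≤ S * |α (t + n)| :=
        mul_le_mul_of_nonneg_right (abs_sub_le_sum_abs_of_abs_succ_sub_le hstep t n) (abs_nonneg _)
      have := neg_abs_le ((Y (t + n) - Y t) * α (t + n))
      rw [abs_mul] at this
      linarith
    have hnext := hsq (t + n)
    rw [← add_assoc, sum_range_succ, sum_range_succ]
    nlinarith [sq_abs (α (t + n))]

end StepBounds

theorem stmt_2 (Y : ℕ → ℝ) (α : ℕ → ℝ)
    (hY0 : ∀ t, 0 ≤ Y t)
    (hdyn : ∀ t, Y (t+1) = max (Y t - α t) 0) :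
    ∀ (t T : ℕ), 1 ≤ T →
      (1/2) * (Y (t+T))^2 ≤ (1/2) * (Y t)^2
        - Y t * ∑ τ ∈ Finset.range T, α (t+τ)
        + (1/2) * (∑ τ ∈ Finset.range T, |α (t+τ)|)^2 := by
  intro t T _
  have hstep : ∀ s, |Y (s + 1) - Y s| ≤ |α s| := fun s ↦ by
    simpa [hdyn s] using abs_max_sub_zero_sub_le (hY0 s) (α s)
  have hsq : ∀ s, Y (s + 1) ^ 2 ≤ (Y s - α s) ^ 2 := fun s ↦ by
    simpa [hdyn s] using sq_max_zero_le (Y s - α s)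
  linarith [sq_le_of_step_bounds hstep hsq t T]
end

section
/- Let x : ℕ → ℝ satisfy 0 ≤ x(τ) ≤ x_max for all τ, and let (t_G) be a strictly increasing sequence of naturals with t_0 = 0 and t_G/G → 1/φ for some 0 < φ ≤ 1. Then limsup_{t→∞} (1/t)Σ_{τ=0}^{t−1} x(τ) ≤ φ·limsup_{G→∞} (1/G)Σ_{τ=0}^{t_G−1} x(τ). -/
/-!
If `t_G ≤ n < t_{G+1}`, then since `x ≥ 0` the running average up to `n` is at most
`(1 / t_G) ∑_{τ < t_{G+1}} x τ = ((G + 1) / t_G) · a_{G+1}`, where `a_G = (1 / G) ∑_{τ < t_G} x τ`.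
Every large `n` lies in such a block with `G` large, and `(G + 1) / t_G → φ`, so the limsup of the
running averages is at most `φ · limsup a`.
-/

open Filter Topology Finset

lemma StrictMono.exists_apply_le_lt_apply_succ {t : ℕ → ℕ} (ht : StrictMono t) {N n : ℕ}
    (hn : t N ≤ n) :
    ∃ G, N ≤ G ∧ t G ≤ n ∧ n < t (G + 1) := by
  have hunb : ¬BddAbove (t '' Set.Ici N) := by
    rintro ⟨b, hb⟩
    have := hb ⟨b + N + 1, Set.mem_Ici.2 (by omega), rfl⟩
    have := ht.le_apply (x := b + N + 1)
    omega
  obtain ⟨G, htG, hNG, hlt⟩ : ∃ G, t G ≤ n ∧ N ≤ G ∧ n < t (G + 1) := by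
    simpa using (biUnion_Ici_Ico_map_succ (fun i hi => ht.monotone hi) hunb).ge (Set.mem_Ici.2 hn)
  exact ⟨G, hNG, htG, hlt⟩

theorem limsup_le_limsup_of_le_on_blocks {β : Type*} [ConditionallyCompleteLinearOrder β]
    [DenselyOrdered β] {t : ℕ → ℕ} (ht : StrictMono t) {f c : ℕ → β}
    (hf : IsCoboundedUnder (· ≤ ·) atTop f) (hc : IsBoundedUnder (· ≤ ·) atTop c)
    (hfc : ∀ᶠ G in atTop, ∀ n, t G ≤ n → n < t (G + 1) → f n ≤ c G) :
    limsup f atTop ≤ limsup c atTop := by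
  refine le_of_forall_gt_imp_ge_of_dense fun L hL => ?_
  obtain ⟨N, hN⟩ := eventually_atTop.1 (hfc.and (eventually_lt_of_limsup_lt hL hc))
  refine limsup_le_of_le hf (eventually_atTop.2 ⟨t N, fun n hn => ?_⟩)
  obtain ⟨G, hNG, htG, hlt⟩ := ht.exists_apply_le_lt_apply_succ hn
  exact ((hN G hNG).1 n htG hlt).trans (hN G hNG).2.le

lemma one_div_mul_sum_range_le {x : ℕ → ℝ} (hx : ∀ τ, 0 ≤ x τ) {m n k : ℕ} (hm : 0 < m)
    (hmn : m ≤ n) (hnk : n ≤ k) :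
    (1 / (n : ℝ)) * ∑ τ ∈ range n, x τ ≤ (1 / (m : ℝ)) * ∑ τ ∈ range k, x τ := by
  gcongr
  · exact sum_nonneg fun τ _ => hx τ
  · exact fun τ _ _ => hx τ

lemma isBoundedUnder_one_div_mul_sum_range {x : ℕ → ℝ} {M : ℝ} (hx : ∀ τ, x τ ≤ M) (hM : 0 ≤ M)
    {t : ℕ → ℕ} (ht : IsBoundedUnder (· ≤ ·) atTop fun G : ℕ => (t G : ℝ) / G) :
    IsBoundedUnder (· ≤ ·) atTop fun G : ℕ => (1 / (G : ℝ)) * ∑ τ ∈ range (t G), x τ := by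
  obtain ⟨C, hC⟩ := ht
  refine ⟨M * C, eventually_map.2 ((eventually_map.1 hC).mono fun G hG => ?_)⟩
  calc (1 / (G : ℝ)) * ∑ τ ∈ range (t G), x τ ≤ (1 / (G : ℝ)) * (t G * M) := by
        gcongr
        simpa using sum_le_card_nsmul (range (t G)) x M fun τ _ => hx τ
    _ = M * (t G / G) := by ring
    _ ≤ M * C := by gcongr

lemma tendsto_succ_div_of_tendsto_div {t : ℕ → ℕ} {r : ℝ} (hr : r ≠ 0)
    (h : Tendsto (fun G : ℕ => (t G : ℝ) / G) atTop (𝓝 r)) :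
    Tendsto (fun G : ℕ => ((G : ℝ) + 1) / t G) atTop (𝓝 r⁻¹) := by
  have := ((tendsto_natCast_div_add_atTop (1 : ℝ)).inv₀ one_ne_zero).mul (h.inv₀ hr)
  rw [inv_one, one_mul] at this
  refine this.congr' ((eventually_ne_atTop 0).mono fun G hG => ?_)
  have : (G : ℝ) ≠ 0 := by exact_mod_cast hG
  field_simp

theorem stmt_19_general (x : ℕ → ℝ) (xmax : ℝ)
    (hx : ∀ τ, 0 ≤ x τ ∧ x τ ≤ xmax)
    (t : ℕ → ℕ) (hmono : StrictMono t)
    (φ : ℝ) (hφ1 : 0 < φ)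
    (hlim : Tendsto (fun G : ℕ => (t G : ℝ) / G) atTop (nhds (1/φ))) :
    limsup (fun n : ℕ => (1/(n:ℝ)) * ∑ τ ∈ Finset.range n, x τ) atTop
      ≤ φ * limsup (fun G : ℕ => (1/(G:ℝ)) * ∑ τ ∈ Finset.range (t G), x τ) atTop := by
  set a : ℕ → ℝ := fun G => (1 / (G : ℝ)) * ∑ τ ∈ range (t G), x τ
  set b : ℕ → ℝ := fun G => ((G : ℝ) + 1) / t G
  have hb : Tendsto b atTop (𝓝 φ) := by
    simpa using tendsto_succ_div_of_tendsto_div (by positivity) hlim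
  have hb_nonneg : ∃ᶠ G in atTop, 0 ≤ b G := .of_forall fun G => by positivity
  have hsum_nonneg (n : ℕ) : 0 ≤ ∑ τ ∈ range n, x τ := sum_nonneg fun τ _ => (hx τ).1
  have ha_nonneg : 0 ≤ᶠ[atTop] fun G => a (G + 1) :=
    .of_forall fun G => mul_nonneg (by positivity) (hsum_nonneg _)
  have ha_bdd : IsBoundedUnder (· ≤ ·) atTop fun G => a (G + 1) :=
    (tendsto_add_atTop_nat 1).isBoundedUnder_comp <| isBoundedUnder_one_div_mul_sum_range
      (fun τ => (hx τ).2) ((hx 0).1.trans (hx 0).2) hlim.isBoundedUnder_le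
  have hblock : ∀ᶠ G in atTop, ∀ n, t G ≤ n → n < t (G + 1) →
      (1 / (n : ℝ)) * ∑ τ ∈ range n, x τ ≤ b G * a (G + 1) := by
    filter_upwards [eventually_ge_atTop 1] with G hG n hn hn'
    calc (1 / (n : ℝ)) * ∑ τ ∈ range n, x τ
        ≤ (1 / (t G : ℝ)) * ∑ τ ∈ range (t (G + 1)), x τ :=
          one_div_mul_sum_range_le (fun τ => (hx τ).1) (hG.trans hmono.le_apply) hn hn'.le
      _ = b G * a (G + 1) := by simp only [b, a]; push_cast; field_simp
  calc limsup (fun n : ℕ => (1 / (n : ℝ)) * ∑ τ ∈ range n, x τ) atTop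
      ≤ limsup (b * fun G => a (G + 1)) atTop :=
        limsup_le_limsup_of_le_on_blocks hmono
          (isBoundedUnder_of_eventually_ge (a := 0) (.of_forall fun n =>
            mul_nonneg (by positivity) (hsum_nonneg n))).isCoboundedUnder_le
          (isBoundedUnder_le_mul_of_nonneg hb_nonneg hb.isBoundedUnder_le ha_nonneg ha_bdd) hblock
    _ ≤ φ * limsup (fun G => a (G + 1)) atTop := by
        simpa only [hb.limsup_eq] using
          limsup_mul_le hb_nonneg hb.isBoundedUnder_le ha_nonneg ha_bdd
    _ = φ * limsup a atTop := by rw [limsup_nat_add a 1]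

theorem stmt_19 (x : ℕ → ℝ) (xmax : ℝ)
    (hx : ∀ τ, 0 ≤ x τ ∧ x τ ≤ xmax)
    (t : ℕ → ℕ) (hmono : StrictMono t) (ht0 : t 0 = 0)
    (φ : ℝ) (hφ1 : 0 < φ) (hφ2 : φ ≤ 1)
    (hlim : Tendsto (fun G : ℕ => (t G : ℝ) / G) atTop (nhds (1/φ))) :
    limsup (fun n : ℕ => (1/(n:ℝ)) * ∑ τ ∈ Finset.range n, x τ) atTop
      ≤ φ * limsup (fun G : ℕ => (1/(G:ℝ)) * ∑ τ ∈ Finset.range (t G), x τ) atTop :=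
  stmt_19_general x xmax hx t hmono φ hφ1 hlim
end
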